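/- arXiv:1609.04480 — 6 statements merged into one kernel-verified Lean document; each statement's English description precedes it below -/
import Mathlib

section
/- For coprime positive integers m and n and an (m,n)-Dyck path D, the area of D (number of lattice cells strictly between D and the main diagonal) equals (1/n) * (sum over j = 1 to n of the rank of the j-th South end of D) minus (n-1)/2. Equivalently, n * area(D) = (sum of the starting ranks of the North steps of D) - n*(n-1)/2. -/
/-- An `(m,n)`-Dyck path is encoded by `f : ℕ → ℕ` where `f j` is the number of East
steps before the `j`-th North step (for `j < n`).  The area is the number of lattice
cells between the path and the diagonal: the cell with southwest corner `(i,j)` lies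
below the path iff `f j ≤ i`, and strictly above the diagonal iff `n*(i+1) ≤ m*j`. -/
def areaF (m n : ℕ) (f : ℕ → ℕ) : ℕ :=
  ∑ j ∈ Finset.range n,
    ((Finset.range m).filter (fun i => f j ≤ i ∧ n * (i + 1) ≤ m * j)).card

/-!
Row `j` of the path contains `⌊m j / n⌋ - f j` cells of the area, and `n` times this is the rank
`m j - n f j` of the South end in row `j` minus the least nonnegative rank `m j mod n` of that row.
Since `m` is invertible modulo `n`, the residues `m j mod n` for `j < n` run over `0, …, n - 1`,
so they sum to `n (n - 1) / 2`.
-/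

open Finset

lemma filter_range_le_mul_succ_le_eq_Ico {m n a c : ℕ} (hn : 0 < n) (hc : c / n ≤ m) :
    (range m).filter (fun i => a ≤ i ∧ n * (i + 1) ≤ c) = Ico a (c / n) := by
  ext i
  simp only [mem_filter, mem_range, mem_Ico, Nat.lt_iff_add_one_le, Nat.le_div_iff_mul_le hn,
    Nat.mul_comm n]
  refine ⟨fun ⟨_, hai⟩ => hai, fun ⟨ha, hi⟩ => ⟨?_, ha, hi⟩⟩
  have := (Nat.le_div_iff_mul_le hn).2 hi
  omega

lemma natCast_mul_div_sub_eq {n a c : ℕ} (h : n * a ≤ c) :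
    (n : ℤ) * ((c / n - a : ℕ) : ℤ) = (c - n * a : ℤ) - ((c % n : ℕ) : ℤ) := by
  rcases n.eq_zero_or_pos with rfl | hn
  · simp
  have ha : a ≤ c / n := (Nat.le_div_iff_mul_le hn).2 (by linarith)
  have hdiv : (n : ℤ) * ((c / n : ℕ) : ℤ) + ((c % n : ℕ) : ℤ) = c := by
    exact_mod_cast Nat.div_add_mod c n
  rw [Nat.cast_sub ha]
  linear_combination hdiv

lemma Nat.Coprime.sum_range_mul_mod {m n : ℕ} (h : m.Coprime n) :
    ∑ j ∈ range n, m * j % n = ∑ j ∈ range n, j := by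
  have hinj : Set.InjOn (fun j => m * j % n) (range n) := by
    intro a ha b hb hab
    exact (Nat.ModEq.cancel_left_of_coprime h.symm hab).eq_of_lt_of_lt
      (mem_range.1 ha) (mem_range.1 hb)
  have himage : (range n).image (fun j => m * j % n) = range n := by
    refine eq_of_subset_of_card_le (fun x hx => ?_) (Finset.card_image_of_injOn hinj).ge
    obtain ⟨j, hj, rfl⟩ := mem_image.1 hx
    exact mem_range.2 (Nat.mod_lt _ (by simp at hj; omega))
  conv_rhs => rw [← himage]
  exact (sum_image (f := id) hinj).symm

theorem sweep_stmt4_general (m n : ℕ) (h : Nat.Coprime m n)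
    (f : ℕ → ℕ)
    (hdyck : ∀ j < n, n * f j ≤ m * j) :
    (n : ℤ) * areaF m n f =
      (∑ j ∈ Finset.range n, ((m : ℤ) * j - (n : ℤ) * f j)) - ((n * (n - 1) / 2 : ℕ) : ℤ) := by
  have hrow : ∀ j ∈ range n,
      (n : ℤ) * (((range m).filter (fun i => f j ≤ i ∧ n * (i + 1) ≤ m * j)).card : ℤ)
        = ((m : ℤ) * j - n * f j) - ((m * j % n : ℕ) : ℤ) := by
    intro j hj
    have hjn := mem_range.1 hj
    have hdiv : m * j / n ≤ m :=
      Nat.div_le_of_le_mul (by rw [Nat.mul_comm n m]; gcongr)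
    rw [filter_range_le_mul_succ_le_eq_Ico (by omega) hdiv, Nat.card_Ico,
      natCast_mul_div_sub_eq (hdyck j hjn)]
    push_cast
    ring
  rw [areaF, Nat.cast_sum, mul_sum, sum_congr rfl hrow, sum_sub_distrib, ← Nat.cast_sum,
    h.sum_range_mul_mod, sum_range_id]

/-- For coprime positive `m, n` and an `(m,n)`-Dyck path, we have
`n * area(D) = (sum of the starting ranks of the North steps of D) - n*(n-1)/2`. -/
theorem sweep_stmt4 (m n : ℕ) (hm : 0 < m) (hn : 0 < n) (h : Nat.Coprime m n)
    (f : ℕ → ℕ)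
    (hmono : ∀ j k, j ≤ k → k < n → f j ≤ f k)
    (hfm : ∀ j < n, f j ≤ m)
    (hdyck : ∀ j < n, n * f j ≤ m * j) :
    (n : ℤ) * areaF m n f =
      (∑ j ∈ Finset.range n, ((m : ℤ) * j - (n : ℤ) * f j)) - ((n * (n - 1) / 2 : ℕ) : ℤ) :=
  sweep_stmt4_general m n h f hdyck
end

section
/- For coprime m and n, the starting ranks of the m+n steps of an (m,n)-Dyck path are pairwise distinct. -/
/-- The rank of the starting vertex of step `i` (0-indexed) of the path `p`
(`true` = North, `false` = East): `a*m - b*n` after `a` North and `b` East steps. -/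
def stepRank (m n : ℕ) (p : List Bool) (i : ℕ) : ℤ :=
  (m : ℤ) * ((p.take i).count true) - (n : ℤ) * ((p.take i).count false)

private lemma count_tf (l : List Bool) : l.count true + l.count false = l.length := by
  induction l with
  | nil => simp
  | cons a t ih => cases a <;> simp [List.count_cons] <;> omega

private lemma count_mono (p : List Bool) (b : Bool) {i j : ℕ} (hij : i ≤ j) :
    (p.take i).count b ≤ (p.take j).count b := by
  have h1 : p.take i = (p.take j).take i := by rw [List.take_take, min_eq_left hij]
  rw [h1]
  exact ((p.take j).take_prefix i).sublist.count_le b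

private lemma count_le_total (p : List Bool) (b : Bool) (i : ℕ) :
    (p.take i).count b ≤ p.count b :=
  (p.take_prefix i).sublist.count_le b

private lemma sweep_aux (m n : ℕ) (hm : 0 < m) (hn : 0 < n) (h : Nat.Coprime m n)
    (p : List Bool) (hlen : p.length = m + n) (hcount : p.count true = n)
    (i j : ℕ) (hi : i < m + n) (hj : j < m + n) (hij : i ≤ j)
    (heq : stepRank m n p i = stepRank m n p j) : i = j := by
  set ai := (p.take i).count true with hai
  set bi := (p.take i).count false with hbi
  set aj := (p.take j).count true with haj
  set bj := (p.take j).count false with hbj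
  have hcf : p.count false = m := by
    have := count_tf p
    omega
  have hsumi : ai + bi = i := by
    have := count_tf (p.take i)
    have : ai + bi = (p.take i).length := this
    rw [List.length_take] at this
    omega
  have hsumj : aj + bj = j := by
    have := count_tf (p.take j)
    have : aj + bj = (p.take j).length := this
    rw [List.length_take] at this
    omega
  have hmono_a : ai ≤ aj := count_mono p true hij
  have hmono_b : bi ≤ bj := count_mono p false hij
  have haj_le : aj ≤ n := hcount ▸ count_le_total p true j
  have hbj_le : bj ≤ m := hcf ▸ count_le_total p false j
  -- from heq : m*(aj-ai) = n*(bj-bi)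
  have key : m * (aj - ai) = n * (bj - bi) := by
    have : (m : ℤ) * ai - n * bi = m * aj - n * bj := heq
    have h2 : (m : ℤ) * ((aj : ℤ) - ai) = n * ((bj : ℤ) - bi) := by ring_nf; linarith
    have h3 : ((m * (aj - ai) : ℕ) : ℤ) = ((n * (bj - bi) : ℕ) : ℤ) := by
      push_cast [Nat.cast_sub hmono_a, Nat.cast_sub hmono_b]
      linarith
    exact_mod_cast h3
  by_cases hz : aj - ai = 0
  · have : bj - bi = 0 := by
      have := key
      rw [hz] at this
      simp at this
      omega
    omega
  · have hda : n ∣ (aj - ai) := by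
      have : n ∣ m * (aj - ai) := ⟨bj - bi, key⟩
      exact (Nat.Coprime.dvd_of_dvd_mul_left h.symm this)
    have hda_eq : aj - ai = n := Nat.le_antisymm (by omega) (Nat.le_of_dvd (by omega) hda)
    have hdb_pos : 0 < bj - bi := by
      by_contra hc
      have : bj - bi = 0 := by omega
      rw [this] at key
      simp at key
      omega
    have hdb : m ∣ (bj - bi) := by
      have : m ∣ n * (bj - bi) := ⟨aj - ai, by linarith [key]⟩
      exact (Nat.Coprime.dvd_of_dvd_mul_left h this)
    have hdb_eq : bj - bi = m := Nat.le_antisymm (by omega) (Nat.le_of_dvd hdb_pos hdb)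
    omega

/-- For coprime `m, n`, the starting ranks of the `m+n` steps of an `(m,n)`-Dyck path
are pairwise distinct. -/
theorem sweep_stmt5 (m n : ℕ) (hm : 0 < m) (hn : 0 < n) (h : Nat.Coprime m n)
    (p : List Bool) (hlen : p.length = m + n) (hcount : p.count true = n)
    (hdyck : ∀ k, n * ((p.take k).count false) ≤ m * ((p.take k).count true)) :
    ∀ i j, i < m + n → j < m + n → stepRank m n p i = stepRank m n p j → i = j := by
  intro i j hi hj heq
  rcases le_total i j with hij | hij
  · exact sweep_aux m n hm hn h p hlen hcount i j hi hj hij heq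
  · exact (sweep_aux m n hm hn h p hlen hcount j i hj hi hij heq.symm).symm
end

section
/- For coprime positive integers m and n, the (m,n)-Dyck path of area 0 has dinv equal to ((m-1)(n-1))/2, i.e., every cell above the path contributes to its dinv. -/
/-- Dinv of the `(m,n)`-Dyck path encoded by `f`: the number of cells `(x,y)` above
the path (`x < f y`) such that the starting rank `a` of the East step below the cell
(the East step in column `x`, starting after `#{j < n : f j ≤ x}` North steps) and
the starting rank `b = m*y - n*f y` of the North step to its right satisfy
`0 ≤ a - b < m + n`. -/
def dinvF (m n : ℕ) (f : ℕ → ℕ) : ℕ :=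
  ((Finset.range m ×ˢ Finset.range n).filter (fun c =>
    c.1 < f c.2 ∧
    0 ≤ ((m : ℤ) * ((Finset.range n).filter (fun j => f j ≤ c.1)).card - (n : ℤ) * c.1)
        - ((m : ℤ) * c.2 - (n : ℤ) * f c.2) ∧
    ((m : ℤ) * ((Finset.range n).filter (fun j => f j ≤ c.1)).card - (n : ℤ) * c.1)
        - ((m : ℤ) * c.2 - (n : ℤ) * f c.2) < (m : ℤ) + n)).card

/-!
Area 0 forces the path to be the staircase `f j = ⌊m j / n⌋`. Along it the East step in
column `x` starts at rank `m ⌈n (x + 1) / m⌉ - n x ∈ [n, n + m)` and the North step in row `y`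
at rank `m y - n ⌊m y / n⌋ ∈ [0, n)`, so every cell above the path counts for dinv. Hence dinv
is the number `∑_{y < n} ⌊m y / n⌋` of cells above the path, and coprimality makes the terms
for `y` and `n - y` add up to `m - 1`.
-/

open Finset

lemma mul_ceilDiv_lt_add {a b : ℕ} (ha : 0 < a) : a * (b ⌈/⌉ a) < b + a := by
  rw [Nat.ceilDiv_eq_add_pred_div, mul_comm]
  exact (Nat.div_mul_le_self _ _).trans_lt (by omega)

lemma filter_range_mul_lt_eq_range_ceilDiv {m n A : ℕ} (hm : 0 < m) (hA : A ≤ m * n) :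
    (range n).filter (fun j => m * j < A) = range (A ⌈/⌉ m) := by
  ext j
  have hlt : j < A ⌈/⌉ m ↔ m * j < A := by
    rw [← not_le, ceilDiv_le_iff_le_mul hm, not_le]
  simp only [mem_filter, mem_range, hlt, and_iff_right_iff_imp]
  intro hj
  exact Nat.lt_of_mul_lt_mul_left (hj.trans_le hA)

lemma mul_div_add_mul_sub_div_of_coprime {m n y : ℕ} (h : Nat.Coprime m n) (hy : 0 < y)
    (hyn : y < n) : m * y / n + m * (n - y) / n = m - 1 := by
  have hn : 0 < n := hy.trans hyn
  have hsum : m * y + m * (n - y) = m * n := by rw [← mul_add, Nat.add_sub_cancel' hyn.le]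
  have hmod : m * y % n ≠ 0 := fun h0 =>
    absurd (Nat.le_of_dvd hy (h.symm.dvd_of_dvd_mul_left (Nat.dvd_of_mod_eq_zero h0))) (by omega)
  -- the two remainders are nonzero and sum to a multiple of `n`
  have hcarry : n ≤ m * y % n + m * (n - y) % n := by
    by_contra! hlt
    have hzero := Nat.add_mod (m * y) (m * (n - y)) n
    rw [hsum, Nat.mul_mod_left, Nat.mod_eq_of_lt hlt] at hzero
    exact hmod (by omega)
  have hquot := Nat.add_div_eq_of_le_mod_add_mod hcarry hn
  rw [hsum, Nat.mul_div_cancel _ hn] at hquot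
  exact Nat.eq_sub_of_add_eq hquot.symm

lemma two_mul_sum_range_mul_div_of_coprime {m n : ℕ} (h : Nat.Coprime m n) :
    2 * ∑ y ∈ range n, m * y / n = (m - 1) * (n - 1) := by
  obtain _ | k := n
  · simp
  have hreflect : ∑ i ∈ range k, m * (i + 1) / (k + 1)
      = ∑ i ∈ range k, m * (k + 1 - (i + 1)) / (k + 1) := by
    rw [← sum_range_reflect]
    refine sum_congr rfl fun i hi => ?_
    rw [mem_range] at hi
    congr 3
    omega
  calc 2 * ∑ y ∈ range (k + 1), m * y / (k + 1)
      = ∑ i ∈ range k, (m * (i + 1) / (k + 1) + m * (k + 1 - (i + 1)) / (k + 1)) := by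
        rw [sum_range_succ', sum_add_distrib, ← hreflect]
        simp only [mul_zero, Nat.zero_div, add_zero]
        ring
    _ = ∑ i ∈ range k, (m - 1) :=
        sum_congr rfl fun i hi => mul_div_add_mul_sub_div_of_coprime h i.succ_pos
          (by simpa using mem_range.mp hi)
    _ = (m - 1) * (k + 1 - 1) := by simp [mul_comm]

lemma card_filter_lt_product_eq_sum {m n : ℕ} {f : ℕ → ℕ} (hf : ∀ y < n, f y ≤ m) :
    ((range m ×ˢ range n).filter (fun c => c.1 < f c.2)).card = ∑ y ∈ range n, f y := by
  rw [card_filter, sum_product_right]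
  refine sum_congr rfl fun y hy => ?_
  have hfy := hf y (mem_range.mp hy)
  rw [← card_filter, ← card_range (f y)]
  congr 1
  ext x
  simp only [mem_filter, mem_range]
  omega

section AreaZero

variable {m n : ℕ} {f : ℕ → ℕ}

lemma mul_lt_mul_succ_of_areaF_eq_zero (harea : areaF m n f = 0) {j : ℕ} (hj : j < n) :
    m * j < n * (f j + 1) := by
  by_contra! hle
  have hfj : f j < m :=
    Nat.lt_of_succ_le (Nat.le_of_mul_le_mul_left (hle.trans (by nlinarith)) (by omega))
  have hempty := sum_eq_zero_iff.mp harea j (mem_range.mpr hj)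
  rw [card_eq_zero, filter_eq_empty_iff] at hempty
  exact hempty (mem_range.mpr hfj) ⟨le_rfl, hle⟩

lemma eq_div_of_areaF_eq_zero (hdyck : ∀ j < n, n * f j ≤ m * j) (harea : areaF m n f = 0)
    {j : ℕ} (hj : j < n) : f j = m * j / n :=
  (Nat.div_eq_of_lt_le ((mul_comm _ _).trans_le (hdyck j hj))
    ((mul_lt_mul_succ_of_areaF_eq_zero harea hj).trans_eq (mul_comm _ _))).symm

lemma card_filter_le_eq_ceilDiv_of_areaF_eq_zero (hdyck : ∀ j < n, n * f j ≤ m * j)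
    (harea : areaF m n f = 0) {x : ℕ} (hx : x < m) :
    ((range n).filter (fun j => f j ≤ x)).card = n * (x + 1) ⌈/⌉ m := by
  have hfilter : (range n).filter (fun j => f j ≤ x)
      = (range n).filter (fun j => m * j < n * (x + 1)) := by
    refine filter_congr fun j hj => ?_
    rw [eq_div_of_areaF_eq_zero hdyck harea (mem_range.mp hj), ← Nat.lt_succ_iff,
      Nat.div_lt_iff_lt_mul (Nat.zero_lt_of_lt (mem_range.mp hj)), mul_comm (x + 1)]
  rw [hfilter, filter_range_mul_lt_eq_range_ceilDiv (by omega) (by nlinarith), card_range]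

lemma dinvF_eq_card_filter_of_areaF_eq_zero (hdyck : ∀ j < n, n * f j ≤ m * j)
    (harea : areaF m n f = 0) :
    dinvF m n f = ((range m ×ˢ range n).filter (fun c => c.1 < f c.2)).card := by
  unfold dinvF
  congr 1
  refine filter_congr fun ⟨x, y⟩ hxy => ?_
  simp only [mem_product, mem_range] at hxy
  obtain ⟨hx, hy⟩ := hxy
  refine ⟨And.left, fun hxf => ⟨hxf, ?_⟩⟩
  rw [card_filter_le_eq_ceilDiv_of_areaF_eq_zero hdyck harea hx]
  have hm : 0 < m := by omega
  have ha₁ : n * (x + 1) ≤ m * (n * (x + 1) ⌈/⌉ m) := le_smul_ceilDiv hm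
  have ha₂ : m * (n * (x + 1) ⌈/⌉ m) < n * (x + 1) + m := mul_ceilDiv_lt_add hm
  have hb₁ := hdyck y hy
  have hb₂ := mul_lt_mul_succ_of_areaF_eq_zero harea hy
  zify at ha₁ ha₂ hb₁ hb₂
  constructor <;> linarith

end AreaZero

theorem sweep_stmt11_general (m n : ℕ) (h : Nat.Coprime m n)
    (f : ℕ → ℕ)
    (hdyck : ∀ j < n, n * f j ≤ m * j)
    (harea : areaF m n f = 0) :
    dinvF m n f = (m - 1) * (n - 1) / 2 := by
  have hfloor : ∑ y ∈ range n, f y = ∑ y ∈ range n, m * y / n :=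
    sum_congr rfl fun y hy => eq_div_of_areaF_eq_zero hdyck harea (mem_range.mp hy)
  have hf_le : ∀ y < n, f y ≤ m := fun y hy =>
    Nat.le_of_mul_le_mul_left ((hdyck y hy).trans (by nlinarith)) (by omega)
  rw [dinvF_eq_card_filter_of_areaF_eq_zero hdyck harea, card_filter_lt_product_eq_sum hf_le,
    hfloor, ← two_mul_sum_range_mul_div_of_coprime h]
  omega

/-- For coprime positive `m, n`, the area-0 `(m,n)`-Dyck path has dinv `(m-1)*(n-1)/2`. -/
theorem sweep_stmt11 (m n : ℕ) (hm : 0 < m) (hn : 0 < n) (h : Nat.Coprime m n)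
    (f : ℕ → ℕ)
    (hmono : ∀ j k, j ≤ k → k < n → f j ≤ f k)
    (hfm : ∀ j < n, f j ≤ m)
    (hdyck : ∀ j < n, n * f j ≤ m * j)
    (harea : areaF m n f = 0) :
    dinvF m n f = (m - 1) * (n - 1) / 2 :=
  sweep_stmt11_general m n h f hdyck harea
end

section
/- For coprime positive integers m and n, in the 'stretched' path diagram of an (m,n)-Dyck path (with red arrows (1,m) for North steps and blue arrows (1,-n) for East steps placed in columns in path order, starting at the ranks of the corresponding vertices), every horizontal row of cells has equal numbers of red and blue segments; moreover within each row the red and blue segments alternate, beginning with a red segment and ending with a blue segment. -/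
lemma stepRank_succ (m n : ℕ) (p : List Bool) (i : ℕ) (hi : i < p.length) :
    stepRank m n p (i+1) =
      if p.getD i true then stepRank m n p i + m else stepRank m n p i - n := by
  have h1 : p.take (i+1) = p.take i ++ [p[i]] := by
    rw [List.take_succ]
    simp [List.getElem?_eq_getElem hi]
  have h2 : p.getD i true = p[i] := List.getD_eq_getElem p true hi
  rw [h2]
  rcases Bool.eq_false_or_eq_true p[i] with hb | hb <;>
    rw [hb] <;> simp [stepRank, h1, hb, List.count_append] <;> ring

lemma alt_aux (r : ℕ → ℤ) (s : ℕ → Bool) (j : ℤ) (h0 : r 0 ≤ j) :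
    ∀ N, (∀ i < N, if s i then r i < r (i+1) else r (i+1) < r i) →
    ∃ k, ((List.range N).filter
        (fun i => decide ((r i ≤ j ∧ j < r (i+1)) ∨ (r (i+1) ≤ j ∧ j < r i)))).map s
      = List.flatten (List.replicate k [true, false]) ++ (if j < r N then [true] else []) := by
  intro N
  induction N with
  | zero =>
      intro _
      refine ⟨0, ?_⟩
      simp [if_neg (not_lt.mpr h0)]
  | succ N ih =>
      intro hs
      obtain ⟨k, hk⟩ := ih (fun i hi => hs i (Nat.lt_succ_of_lt hi))
      have hsl := hs N (Nat.lt_succ_self N)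
      by_cases hA : j < r N <;> by_cases hB : j < r (N+1)
      · -- above, above : no crossing
        refine ⟨k, ?_⟩
        rw [List.range_succ, List.filter_append, List.map_append]
        have : List.filter (fun i => decide ((r i ≤ j ∧ j < r (i+1)) ∨ (r (i+1) ≤ j ∧ j < r i))) [N] = [] := by
          simp; omega
        rw [this, hk]
        simp [if_pos hA, if_pos hB]
      · -- above → below : down crossing, s N = false
        have hsN : s N = false := by
          by_contra hc
          rw [Bool.not_eq_false] at hc
          rw [hc] at hsl; simp at hsl; omega
        refine ⟨k + 1, ?_⟩
        rw [List.range_succ, List.filter_append, List.map_append]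
        have : List.filter (fun i => decide ((r i ≤ j ∧ j < r (i+1)) ∨ (r (i+1) ≤ j ∧ j < r i))) [N] = [N] := by
          simp; omega
        rw [this, hk]
        simp [if_pos hA, if_neg hB, hsN, List.replicate_succ' (n := k), List.flatten_append]
      · -- below → above : up crossing, s N = true
        have hsN : s N = true := by
          by_contra hc
          rw [Bool.not_eq_true] at hc
          rw [hc] at hsl; simp at hsl; omega
        refine ⟨k, ?_⟩
        rw [List.range_succ, List.filter_append, List.map_append]
        have : List.filter (fun i => decide ((r i ≤ j ∧ j < r (i+1)) ∨ (r (i+1) ≤ j ∧ j < r i))) [N] = [N] := by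
          simp; omega
        rw [this, hk]
        simp [if_neg hA, if_pos hB, hsN]
      · -- below, below : no crossing
        refine ⟨k, ?_⟩
        rw [List.range_succ, List.filter_append, List.map_append]
        have : List.filter (fun i => decide ((r i ≤ j ∧ j < r (i+1)) ∨ (r (i+1) ≤ j ∧ j < r i))) [N] = [] := by
          simp; omega
        rw [this, hk]
        simp [if_neg hA, if_neg hB]

lemma stepRank_nonneg (m n : ℕ) (p : List Bool)
    (hdyck : ∀ k, n * ((p.take k).count false) ≤ m * ((p.take k).count true)) (k : ℕ) :
    0 ≤ stepRank m n p k := by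
  have h := hdyck k
  have h' : (n : ℤ) * ((p.take k).count false) ≤ (m : ℤ) * ((p.take k).count true) := by
    exact_mod_cast h
  unfold stepRank
  linarith

/-- In the stretched path diagram of an `(m,n)`-Dyck path (column `i` carries a red
up-arrow `(1,m)` if step `i` is North, a blue down-arrow `(1,-n)` if step `i` is East,
starting at height `stepRank i`), the list of segment colours in any row `j` (`true` =
red), read from left to right, is an alternating sequence `red, blue, red, blue, …`
beginning with red and ending with blue; in particular each row contains equally many
red and blue segments.  A red arrow has a segment in row `j` iff
`rank i ≤ j < rank i + m`; a blue arrow iff `rank i - n ≤ j < rank i`. -/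
theorem sweep_stmt15 (m n : ℕ) (hm : 0 < m) (hn : 0 < n) (h : Nat.Coprime m n)
    (p : List Bool) (hlen : p.length = m + n) (hcount : p.count true = n)
    (hdyck : ∀ k, n * ((p.take k).count false) ≤ m * ((p.take k).count true))
    (j : ℤ) :
    ∃ k, ((List.range (m + n)).filter (fun i =>
        if p.getD i true = true then
          decide (stepRank m n p i ≤ j ∧ j < stepRank m n p i + m)
        else
          decide (stepRank m n p i - n ≤ j ∧ j < stepRank m n p i))).map
        (fun i => p.getD i true)
      = List.flatten (List.replicate k [true, false]) := by
  by_cases hj : j < 0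
  · refine ⟨0, ?_⟩
    have hnil : (List.range (m + n)).filter (fun i =>
        if p.getD i true = true then
          decide (stepRank m n p i ≤ j ∧ j < stepRank m n p i + m)
        else
          decide (stepRank m n p i - n ≤ j ∧ j < stepRank m n p i)) = [] := by
      rw [List.filter_eq_nil_iff]
      intro i hi
      have hi' : i < p.length := by rw [hlen]; exact List.mem_range.mp hi
      have h0 := stepRank_nonneg m n p hdyck i
      have h1 := stepRank_nonneg m n p hdyck (i+1)
      have hstep := stepRank_succ m n p i hi'
      rcases Bool.eq_false_or_eq_true (p.getD i true) with hb | hb <;>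
        rw [hb] at hstep ⊢ <;> simp only [Bool.false_eq_true, if_true, if_false,
          ite_true, ite_false] at hstep ⊢ <;> simp <;> omega
    rw [hnil]
    simp
  · push_neg at hj
    have hs : ∀ i < m + n, if p.getD i true then
        stepRank m n p i < stepRank m n p (i+1)
      else stepRank m n p (i+1) < stepRank m n p i := by
      intro i hi
      have hi' : i < p.length := by rw [hlen]; exact hi
      have hstep := stepRank_succ m n p i hi'
      rcases Bool.eq_false_or_eq_true (p.getD i true) with hb | hb <;>
        rw [hb] at hstep ⊢ <;> simp only [Bool.false_eq_true, if_true, if_false,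
          ite_true, ite_false] at hstep ⊢ <;> simp [hstep] <;> omega
    have h0 : stepRank m n p 0 ≤ j := by simpa [stepRank] using hj
    obtain ⟨k, hk⟩ := alt_aux (stepRank m n p) (fun i => p.getD i true) j h0 (m + n) hs
    refine ⟨k, ?_⟩
    have hend : stepRank m n p (m + n) = 0 := by
      have ht : p.take (m + n) = p := List.take_of_length_le (by omega)
      have hcf : p.count false = m := by
        have := List.count_true_add_count_false p
        omega
      simp [stepRank, ht, hcount, hcf]
      ring
    rw [hend, if_neg (not_lt.mpr hj)] at hk
    rw [List.append_nil] at hk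
    rw [← hk]
    congr 1
    apply List.filter_congr
    intro i hi
    have hi' : i < p.length := by rw [hlen]; exact List.mem_range.mp hi
    have hstep := stepRank_succ m n p i hi'
    rcases Bool.eq_false_or_eq_true (p.getD i true) with hb | hb <;>
      rw [hb] at hstep ⊢ <;> simp only [Bool.false_eq_true, if_true, if_false,
          ite_true, ite_false] at hstep ⊢ <;> rw [hstep] <;>
      · rw [decide_eq_decide]; constructor
        · intro hx; omega
        · intro hx; omega
end

section
/- For coprime positive integers m and n, every (m,n)-Dyck path of positive area contains a consecutive North-then-East pair of steps whose swap to East-then-North yields another (m,n)-Dyck path; consequently, every (m,n)-Dyck path can be obtained from the area-0 path by a sequence of East-North to North-East swaps. -/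
open scoped Classical

/-- `p` is an `(m,n)`-Dyck path: a 0-1 sequence (`true` = North, `false` = East) of
length `m+n` with `n` North steps, all of whose prefix ranks are nonnegative. -/
def IsDyckPath (m n : ℕ) (p : List Bool) : Prop :=
  p.length = m + n ∧ p.count true = n ∧
    ∀ k, n * ((p.take k).count false) ≤ m * ((p.take k).count true)

/-- Area of an `(m,n)`-path `q`: the number of cells below the path and strictly
above the diagonal. -/
noncomputable def areaL (m n : ℕ) (q : List Bool) : ℕ :=
  ((Finset.range m ×ˢ Finset.range n).filter (fun c =>
    (∃ i < m + n, q.getD i true = false ∧ (q.take i).count false = c.1 ∧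
        c.2 + 1 ≤ (q.take i).count true) ∧
    n * (c.1 + 1) ≤ m * c.2)).card

/-- The elementary move: `q'` is obtained from `q` by swapping a consecutive
East-then-North pair of steps to North-then-East, both paths being Dyck. -/
def SwapRel (m n : ℕ) (q q' : List Bool) : Prop :=
  ∃ a b, q = a ++ [false, true] ++ b ∧ q' = a ++ [true, false] ++ b ∧
    IsDyckPath m n q ∧ IsDyckPath m n q'

/-! Write `E`, `N` for the numbers of East and North steps before a vertex; its rank is
`m N - n E`. A path has positive area exactly when some East step starts at rank at least
`m + n`. At the first such East step the previous step is North (an East step before it would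
start at an even larger rank), and swapping this North-East pair lowers the rank of the single
vertex between them by `m + n`, so the path stays Dyck. A path of area zero, on the other hand,
goes East whenever the Dyck condition allows it, which determines it. Since every swap lowers
the number of North-before-East pairs, induction on that number connects each Dyck path to the
area-zero path. -/

section

variable {m n : ℕ}

namespace IsDyckPath

variable {p : List Bool}

theorem count_false (hp : IsDyckPath m n p) : p.count false = m := by
  have := List.count_true_add_count_false p
  rw [hp.1, hp.2.1] at this
  omega

theorem rank_le_of_eq_append {a b : List Bool} (hp : IsDyckPath m n p) (h : p = a ++ b) :
    n * a.count false ≤ m * a.count true := by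
  simpa [h] using hp.2.2 a.length

theorem swap {a b : List Bool} (hp : IsDyckPath m n (a ++ [true, false] ++ b))
    (ha : n * (a.count false + 1) ≤ m * a.count true) :
    IsDyckPath m n (a ++ [false, true] ++ b) := by
  obtain ⟨hlen, hnorth, hrank⟩ := hp
  refine ⟨by simpa using hlen, by simpa using hnorth, fun k => ?_⟩
  have hk := hrank k
  simp only [List.append_assoc, List.cons_append, List.nil_append, List.take_append] at hk ⊢
  rcases h : k - a.length with _ | _ | j
  · simpa [h] using hk
  · rw [List.take_of_length_le (by omega)]
    simpa using ha
  · simp [h, List.count_append] at hk ⊢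
    omega

theorem areaL_pos_of_eq_append {a b : List Bool} (hp : IsDyckPath m n p)
    (h : p = a ++ false :: b) (ha : n * (a.count false + 1) + m ≤ m * a.count true) :
    0 < areaL m n p := by
  have hm : a.count false < m := by
    have := hp.count_false
    simp [h, List.count_append] at this
    omega
  obtain ⟨y, hy⟩ : ∃ y, a.count true = y + 1 :=
    Nat.exists_eq_add_one.mpr (Nat.pos_of_mul_pos_left (by omega : 0 < m * a.count true))
  have hn : a.count true ≤ n := by
    simp [← hp.2.1, h, List.count_append]
  refine Finset.card_pos.mpr ⟨(a.count false, y), Finset.mem_filter.mpr ⟨?_, ?_, ?_⟩⟩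
  · simp only [Finset.mem_product, Finset.mem_range]
    omega
  · refine ⟨a.length, ?_, by simp [h], by simp [h], by simp [h, hy]⟩
    rw [← hp.1, h]
    simp
  · dsimp only
    rw [hy, mul_add_one m y] at ha
    omega

end IsDyckPath

theorem exists_eq_append_of_areaL_pos {p : List Bool} (h : 0 < areaL m n p) :
    ∃ a b, p = a ++ false :: b ∧ n * (a.count false + 1) + m ≤ m * a.count true := by
  obtain ⟨⟨x, y⟩, hc⟩ := Finset.card_pos.mp h
  obtain ⟨-, ⟨i, -, hi, rfl, hy⟩, hdiag⟩ := Finset.mem_filter.mp hc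
  dsimp only at hy hdiag
  have hil : i < p.length := by
    by_contra hil
    rw [List.getD_eq_default _ _ (not_lt.mp hil)] at hi
    exact Bool.noConfusion hi
  refine ⟨p.take i, p.drop (i + 1), ?_, ?_⟩
  · rw [List.getD_eq_getElem _ _ hil] at hi
    rw [← hi, List.getElem_cons_drop, List.take_append_drop]
  · calc n * ((p.take i).count false + 1) + m ≤ m * (y + 1) := by rw [mul_add_one m y]; omega
      _ ≤ m * (p.take i).count true := Nat.mul_le_mul_left m hy

theorem exists_north_east_of_east_step (hm : 0 < m) {a b : List Bool}
    (ha : n * (a.count false + 1) + m ≤ m * a.count true) :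
    ∃ c d, a ++ false :: b = c ++ [true, false] ++ d ∧
      n * (c.count false + 1) ≤ m * c.count true := by
  induction a using List.reverseRecOn generalizing b with
  | nil => simp at ha; omega
  | append_singleton a x ih =>
    cases x with
    | true => exact ⟨a, b, by simp, by simpa [List.count_append, mul_add_one] using ha⟩
    | false =>
      obtain ⟨c, d, hcd, hc⟩ := ih (b := false :: b) (by simp at ha; linarith)
      exact ⟨c, d, by simpa using hcd, hc⟩

namespace IsDyckPath

variable {p : List Bool}

theorem exists_swap_of_areaL_pos (hm : 0 < m) (hp : IsDyckPath m n p)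
    (h : 0 < areaL m n p) :
    ∃ a b, p = a ++ [true, false] ++ b ∧ IsDyckPath m n (a ++ [false, true] ++ b) := by
  obtain ⟨a, b, rfl, ha⟩ := exists_eq_append_of_areaL_pos h
  obtain ⟨c, d, hcd, hc⟩ := exists_north_east_of_east_step hm ha
  exact ⟨c, d, hcd, (hcd ▸ hp).swap hc⟩

theorem eq_false_iff_of_areaL_eq_zero {c d : List Bool} {x : Bool} (hp : IsDyckPath m n p)
    (h₀ : areaL m n p = 0) (h : p = c ++ x :: d) :
    x = false ↔ c.count false < m ∧ n * (c.count false + 1) ≤ m * c.count true := by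
  have hcount := hp.count_false
  rw [h, List.count_append] at hcount
  constructor
  · rintro rfl
    refine ⟨by simp at hcount; omega, ?_⟩
    simpa using hp.rank_le_of_eq_append (a := c ++ [false]) (b := d) (by simp [h])
  · rintro ⟨hc, hrank⟩
    by_contra hx
    rw [Bool.not_eq_false] at hx
    subst hx
    -- going North here, the path reaches its next East step at rank at least `m + n`
    obtain ⟨t, u, rfl, ht⟩ : ∃ t u, d = t ++ false :: u ∧ false ∉ t :=
      List.eq_append_cons_of_mem (List.count_pos_iff.mp (by simp at hcount; omega))
    have hpos := hp.areaL_pos_of_eq_append (a := c ++ true :: t) (b := u) (by simp [h]) (by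
      simp [List.count_append, List.count_eq_zero.mpr ht]
      nlinarith)
    omega

theorem eq_of_areaL_eq_zero {q : List Bool} (hp : IsDyckPath m n p) (hq : IsDyckPath m n q)
    (hp₀ : areaL m n p = 0) (hq₀ : areaL m n q = 0) : p = q := by
  suffices ∀ c p' q', p = c ++ p' → q = c ++ q' → p' = q' from this [] p q rfl rfl
  intro c p' q' hpc hqc
  have hlen : p'.length = q'.length := by
    simpa [hpc, hqc] using hp.1.trans hq.1.symm
  induction p' generalizing c q' with
  | nil => exact (List.length_eq_zero_iff.mp hlen.symm).symm
  | cons x p' ih =>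
    obtain _ | ⟨y, q'⟩ := q'
    · simp at hlen
    have hxy : x = false ↔ y = false :=
      (hp.eq_false_iff_of_areaL_eq_zero hp₀ hpc).trans
        (hq.eq_false_iff_of_areaL_eq_zero hq₀ hqc).symm
    obtain rfl : x = y := by cases x <;> cases y <;> simp_all
    rw [ih (c ++ [x]) q' (by simp [hpc]) (by simp [hqc]) (by simpa using hlen)]

end IsDyckPath

-- the number of cells between the path and the lowest path `E^m N^n`
def northEastInversions : List Bool → ℕ
  | [] => 0
  | x :: l => (if x then l.count false else 0) + northEastInversions l

theorem northEastInversions_append (l₁ l₂ : List Bool) :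
    northEastInversions (l₁ ++ l₂) =
      northEastInversions l₁ + northEastInversions l₂ + l₁.count true * l₂.count false := by
  induction l₁ with
  | nil => simp [northEastInversions]
  | cons x l ih =>
    cases x
    · simp [northEastInversions, ih]
    · simp [northEastInversions, ih, List.count_append]
      ring

theorem northEastInversions_swap_lt (a b : List Bool) :
    northEastInversions (a ++ [false, true] ++ b) <
      northEastInversions (a ++ [true, false] ++ b) := by
  simp [northEastInversions_append, northEastInversions]

theorem IsDyckPath.reflTransGen_swapRel (hm : 0 < m) {p₀ p : List Bool}
    (hp₀ : IsDyckPath m n p₀) (h₀ : areaL m n p₀ = 0) (hp : IsDyckPath m n p) :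
    Relation.ReflTransGen (SwapRel m n) p₀ p := by
  induction hk : northEastInversions p using Nat.strong_induction_on generalizing p with
  | _ k ih =>
    rcases Nat.eq_zero_or_pos (areaL m n p) with hz | hpos
    · rw [hp₀.eq_of_areaL_eq_zero hp h₀ hz]
    · obtain ⟨a, b, rfl, hq⟩ := hp.exists_swap_of_areaL_pos hm hpos
      exact (ih _ (hk ▸ northEastInversions_swap_lt a b) hq rfl).tail ⟨a, b, rfl, rfl, hq, hp⟩

end

theorem sweep_stmt17_general (m n : ℕ) (hm : 0 < m)
    (p : List Bool) (hp : IsDyckPath m n p) :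
    (0 < areaL m n p →
      ∃ a b, p = a ++ [true, false] ++ b ∧ IsDyckPath m n (a ++ [false, true] ++ b)) ∧
    (∀ p₀, IsDyckPath m n p₀ → areaL m n p₀ = 0 →
      Relation.ReflTransGen (SwapRel m n) p₀ p) :=
  ⟨hp.exists_swap_of_areaL_pos hm, fun _ hp₀ h₀ => hp₀.reflTransGen_swapRel hm h₀ hp⟩

/-- For coprime positive `m, n`: every `(m,n)`-Dyck path of positive area contains a
consecutive North-then-East pair whose swap to East-then-North yields another
`(m,n)`-Dyck path; consequently every `(m,n)`-Dyck path is obtained from the area-0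
path by a sequence of East-North to North-East swaps. -/
theorem sweep_stmt17 (m n : ℕ) (hm : 0 < m) (hn : 0 < n) (h : Nat.Coprime m n)
    (p : List Bool) (hp : IsDyckPath m n p) :
    (0 < areaL m n p →
      ∃ a b, p = a ++ [true, false] ++ b ∧ IsDyckPath m n (a ++ [false, true] ++ b)) ∧
    (∀ p₀, IsDyckPath m n p₀ → areaL m n p₀ = 0 →
      Relation.ReflTransGen (SwapRel m n) p₀ p) :=
  sweep_stmt17_general m n hm p hp
end

section
/- The number of (m,n)-Dyck paths, for coprime positive integers m and n, is (1/(m+n)) * binomial(m+n, n). -/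
/-!
Cycle lemma. Give each letter `true` (North step) weight `m` and each `false` (East step)
weight `-n`; a word with `n` letters `true` among `m + n` then has weight `0`, and it is a Dyck
word iff all its prefix weights are nonnegative. The prefix weights of the rotation by `k` are
those of the word minus its `k`-th prefix weight, so that rotation is Dyck iff `k` minimises the
prefix weight. A factor of weight `0` has length divisible by `m + n` because `m + n` and `n` are
coprime, so the prefix weights at `0, …, m + n - 1` are pairwise distinct and exactly one of the
`m + n` rotations is Dyck. Hence rotation is a bijection from Dyck words × `Fin (m + n)` onto
all `binomial(m + n, n)` words.
-/

open Finset

namespace RationalCatalan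

variable {m n : ℕ}

def boolFunEquivFinset (L n : ℕ) :
    {f : Fin L → Bool // #{i | f i = true} = n} ≃ {s : Finset (Fin L) // #s = n} where
  toFun f := ⟨({i | f.1 i = true} : Finset (Fin L)), f.2⟩
  invFun s := ⟨(· ∈ s.1), by simpa using s.2⟩
  left_inv f := by ext; simp
  right_inv s := by ext; simp

lemma card_words (L n : ℕ) :
    Nat.card {p : List Bool // p.length = L ∧ p.count true = n} = L.choose n := by
  let e : {p : List Bool // p.length = L ∧ p.count true = n} ≃ {s : Finset (Fin L) // #s = n} :=
    (Equiv.subtypeSubtypeEquivSubtypeInter (fun p : List Bool => p.length = L)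
      (fun p => p.count true = n)).symm.trans <|
    ((Equiv.vectorEquivFin Bool L).subtypeEquiv fun v => by
      rw [Equiv.vectorEquivFin, Equiv.coe_fn_mk, Fin.card_filter_univ_eq_vector_get_eq_count]
      rfl).trans
    (boolFunEquivFinset L n)
  rw [Nat.card_congr e, Nat.card_eq_fintype_card, Fintype.card_finset_len, Fintype.card_fin]

def weight (m n : ℕ) (l : List Bool) : ℤ := m * l.count true - n * l.count false

@[simp] lemma weight_nil : weight m n [] = 0 := by simp [weight]

@[simp] lemma weight_append (l₁ l₂ : List Bool) :
    weight m n (l₁ ++ l₂) = weight m n l₁ + weight m n l₂ := by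
  simp only [weight, List.count_append]
  push_cast
  ring

lemma weight_drop (l : List Bool) (k : ℕ) :
    weight m n (l.drop k) = weight m n l - weight m n (l.take k) := by
  rw [eq_sub_iff_add_eq', ← weight_append, List.take_append_drop]

lemma weight_eq_zero {l : List Bool} (hlen : l.length = m + n) (hct : l.count true = n) :
    weight m n l = 0 := by
  have hcf : l.count false = m := by
    have := l.count_true_add_count_false
    omega
  rw [weight, hct, hcf]
  ring

def IsDyck (m n : ℕ) (p : List Bool) : Prop := ∀ k, 0 ≤ weight m n (p.take k)

lemma isDyck_iff {p : List Bool} :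
    IsDyck m n p ↔ ∀ k, n * (p.take k).count false ≤ m * (p.take k).count true := by
  simp only [IsDyck, weight, sub_nonneg]
  exact_mod_cast Iff.rfl

section Rotate

variable {l : List Bool} {k : ℕ}

lemma weight_take_rotate (m n : ℕ) (hk : k ≤ l.length) {j : ℕ} (hj : k + j ≤ l.length) :
    weight m n ((l.rotate k).take j) = weight m n (l.take (k + j)) - weight m n (l.take k) := by
  rw [List.rotate_eq_drop_append_take hk, List.take_append_of_le_length (by simp; omega),
    List.take_add, weight_append]
  ring

lemma weight_take_rotate_add (hl : weight m n l = 0) (hk : k ≤ l.length) {i : ℕ}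
    (hi : i ≤ k) :
    weight m n ((l.rotate k).take (l.length - k + i)) =
      weight m n (l.take i) - weight m n (l.take k) := by
  have hd : (l.drop k).length = l.length - k := List.length_drop
  rw [List.rotate_eq_drop_append_take hk, ← hd, List.take_length_add_append, List.take_take,
    min_eq_left hi, weight_append, weight_drop, hl]
  ring

lemma isDyck_rotate_iff (hl : weight m n l = 0) (hk : k ≤ l.length) :
    IsDyck m n (l.rotate k) ↔
      ∀ i ≤ l.length, weight m n (l.take k) ≤ weight m n (l.take i) := by
  constructor
  · intro hD i hi
    rcases le_or_gt k i with hki | hik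
    · have := weight_take_rotate m n hk (j := i - k) (by omega)
      rw [Nat.add_sub_cancel' hki] at this
      linarith [hD (i - k)]
    · linarith [hD (l.length - k + i), weight_take_rotate_add hl hk hik.le]
  · intro hmin j
    rcases le_or_gt (k + j) l.length with hkj | hkj
    · linarith [weight_take_rotate m n hk hkj, hmin _ hkj]
    · obtain ⟨i, hi, hj⟩ :
          ∃ i ≤ k, (l.rotate k).take j = (l.rotate k).take (l.length - k + i) :=
        ⟨min (j - (l.length - k)) k, min_le_right _ _, by
          rw [List.take_eq_take_iff, List.length_rotate]; omega⟩
      rw [hj, weight_take_rotate_add hl hk hi]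
      linarith [hmin i (by omega)]

end Rotate

lemma add_pos_of_coprime (hco : m.Coprime n) : 0 < m + n := by
  by_contra! h0
  obtain ⟨rfl, rfl⟩ : m = 0 ∧ n = 0 := by omega
  simp at hco

lemma add_dvd_length_of_weight_eq_zero (hco : m.Coprime n) {s : List Bool}
    (hs : weight m n s = 0) : m + n ∣ s.length := by
  have hmn : m * s.count true = n * s.count false := by
    simp only [weight, sub_eq_zero] at hs
    exact_mod_cast hs
  have hsum := s.count_true_add_count_false
  refine (Nat.coprime_add_self_left.mpr hco).dvd_of_dvd_mul_left ⟨s.count true, ?_⟩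
  rw [← hsum]
  linarith

lemma injOn_weight_take (hco : m.Coprime n) {l : List Bool} (hlen : l.length ≤ m + n) :
    Set.InjOn (fun i => weight m n (l.take i)) (Set.Iio l.length) := by
  intro i hi j hj h
  by_contra hne
  wlog hij : i < j generalizing i j
  · exact this hj hi h.symm (Ne.symm hne) (by omega)
  have hseg := (l.take j).take_append_drop i
  rw [List.take_take, min_eq_left hij.le] at hseg
  have hw : weight m n ((l.take j).drop i) = 0 := by
    have := congrArg (weight m n) hseg
    simp only [weight_append] at this h
    linarith
  have hdvd := add_dvd_length_of_weight_eq_zero hco hw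
  simp only [List.length_drop, List.length_take, Set.mem_Iio] at hdvd hj
  have := Nat.le_of_dvd (by omega) hdvd
  omega

theorem existsUnique_isDyck_rotate (hco : m.Coprime n) {l : List Bool}
    (hlen : l.length = m + n) (hct : l.count true = n) :
    ∃! k, k < m + n ∧ IsDyck m n (l.rotate k) := by
  have hl := weight_eq_zero hlen hct
  have hpos := add_pos_of_coprime hco
  obtain ⟨k, hk, hmin⟩ := Finset.exists_min_image (Finset.range (m + n))
    (fun i => weight m n (l.take i)) (Finset.nonempty_range_iff.mpr hpos.ne')
  rw [Finset.mem_range] at hk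
  have hkmin : ∀ i ≤ l.length, weight m n (l.take k) ≤ weight m n (l.take i) := by
    intro i hi
    rcases hi.lt_or_eq with hi | rfl
    · exact hmin i (Finset.mem_range.mpr (hlen ▸ hi))
    · simpa [hl] using hmin 0 (Finset.mem_range.mpr hpos)
  refine ⟨k, ⟨hk, (isDyck_rotate_iff hl (by omega)).mpr hkmin⟩, ?_⟩
  rintro k' ⟨hk', hD'⟩
  refine injOn_weight_take hco hlen.le (by simp; omega) (by simp; omega) (le_antisymm ?_ ?_)
  · exact (isDyck_rotate_iff hl (by omega)).mp hD' k (by omega)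
  · exact hkmin k' (by omega)

lemma eq_zero_of_isDyck_rotate (hco : m.Coprime n) {l : List Bool}
    (hlen : l.length = m + n) (hct : l.count true = n) (hD : IsDyck m n l) {k : ℕ}
    (hk : k < m + n) (hDk : IsDyck m n (l.rotate k)) : k = 0 :=
  (existsUnique_isDyck_rotate hco hlen hct).unique ⟨hk, hDk⟩ ⟨by omega, by simpa using hD⟩

lemma bijective_rotate (hco : m.Coprime n) :
    Function.Bijective fun x : {p : List Bool // p.length = m + n ∧ p.count true = n ∧
        IsDyck m n p} × Fin (m + n) =>
      (⟨x.1.1.rotate x.2, by simp [x.1.2.1],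
          by rw [(List.rotate_perm _ _).count_eq, x.1.2.2.1]⟩ :
        {p : List Bool // p.length = m + n ∧ p.count true = n}) := by
  constructor
  · rintro ⟨⟨d, hd⟩, j⟩ ⟨⟨d', hd'⟩, j'⟩ h
    simp only [Subtype.mk.injEq] at h
    wlog hjj : j ≤ j' generalizing d d' j j'
    · exact (this _ _ _ _ _ _ h.symm (by omega)).symm
    have hdd' : d = d'.rotate (j' - j) := by
      rw [← List.rotate_eq_rotate (n := j), List.rotate_rotate, Nat.sub_add_cancel hjj, h]
    have hj0 : (j' : ℕ) - j = 0 :=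
      eq_zero_of_isDyck_rotate hco hd'.1 hd'.2.1 hd'.2.2 (by omega) (hdd' ▸ hd.2.2)
    obtain rfl : j = j' := Fin.ext (by omega)
    simp only [hj0, List.rotate_zero] at hdd'
    subst hdd'
    rfl
  · rintro ⟨p, hp⟩
    obtain ⟨k, ⟨hk, hD⟩, -⟩ := existsUnique_isDyck_rotate hco hp.1 hp.2
    have hlen : (p.rotate k).length = m + n := by simp [hp.1]
    refine ⟨(⟨p.rotate k, hlen, by rw [(List.rotate_perm _ _).count_eq, hp.2], hD⟩,
      ⟨(m + n - k) % (m + n), Nat.mod_lt _ (by omega)⟩), ?_⟩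
    ext1
    show (p.rotate k).rotate ((m + n - k) % (m + n)) = p
    rw [← hlen, List.rotate_mod, List.rotate_rotate, hlen, Nat.add_sub_cancel' hk.le, ← hp.1,
      List.rotate_length]

lemma card_words_eq_card_dyck_mul (hco : m.Coprime n) :
    Nat.card {p : List Bool // p.length = m + n ∧ p.count true = n} =
      Nat.card {p : List Bool // p.length = m + n ∧ p.count true = n ∧ IsDyck m n p} *
        (m + n) := by
  rw [← Nat.card_congr (Equiv.ofBijective _ (bijective_rotate hco)), Nat.card_prod, Nat.card_fin]

end RationalCatalan


theorem sweep_stmt18_general (m n : ℕ) (h : Nat.Coprime m n) :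
    Nat.card {p : List Bool // p.length = m + n ∧ p.count true = n ∧
        ∀ k, n * ((p.take k).count false) ≤ m * ((p.take k).count true)}
      = (m + n).choose n / (m + n) := by
  simp_rw [← RationalCatalan.isDyck_iff]
  rw [← RationalCatalan.card_words, RationalCatalan.card_words_eq_card_dyck_mul h,
    Nat.mul_div_cancel _ (RationalCatalan.add_pos_of_coprime h)]

/-- For coprime positive `m, n`, the number of `(m,n)`-Dyck paths (0-1 sequences of
length `m+n` with `n` ones—North steps—whose every prefix with `a` ones and `b`
zeros satisfies `n*b ≤ m*a`) is the rational Catalan number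
`binomial(m+n, n) / (m+n)`. -/
theorem sweep_stmt18 (m n : ℕ) (hm : 0 < m) (hn : 0 < n) (h : Nat.Coprime m n) :
    Nat.card {p : List Bool // p.length = m + n ∧ p.count true = n ∧
        ∀ k, n * ((p.take k).count false) ≤ m * ((p.take k).count true)}
      = (m + n).choose n / (m + n) :=
  sweep_stmt18_general m n h
end
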